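/- With the soft-thresholding operator S_{λd}(ξ)_j = sgn(ξ_j)max{|ξ_j| − λd_j, 0} and group shrinkage T_{μw} acting blockwise as in the group lasso prox, the point 0 ∈ ℝ^p is a fixed point satisfying T_{μw}(S_{λd}(ξ)) = 0 if and only if for every group ℓ, ‖S_{λd}(ξ)_{G_ℓ}‖₂ ≤ μ w_ℓ; equivalently, β = 0 minimizes β ↦ h(β) + (1/2)‖β − ξ‖₂² with h the sparse group lasso penalty iff ‖S_{λd}(ξ)_{G_ℓ}‖₂ ≤ μ w_ℓ for all ℓ. -/

import Mathlib

/-!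
Soft thresholding `s = S_t(x)` is characterised by `x - s` being a subgradient of `t|·|` at `s`:
`|x - s| ≤ t` and `(x - s) s = t |s|`. Because the groups partition the coordinates,
`F(β) - F(0)`, for `F(β) = h(β) + ‖β - ξ‖² / 2`, splits into one increment per group `G`
with threshold `c = μ w_G`. If `‖s_G‖ ≤ c` then, by the subgradient
inequality and Cauchy–Schwarz, the increment of `G` is nonnegative for every `β`. Conversely,
at the group-shrinkage point `T` the increment of `G` equals `-(‖s_G‖ - c)₊² / 2`, so `F(0) ≤ F(T)`
forces every excess `(‖s_G‖ - c)₊` to vanish; the same excess is `‖T_G‖`, which gives the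
characterisation of `T = 0`.
-/

open Finset Real

section SoftThreshold

noncomputable def softThreshold (t x : ℝ) : ℝ := Real.sign x * max (|x| - t) 0

variable {t : ℝ} (x : ℝ)

theorem softThreshold_subgradient (ht : 0 ≤ t) : |x - softThreshold t x| ≤ t ∧
    (x - softThreshold t x) * softThreshold t x = t * |softThreshold t x| := by
  rcases lt_or_ge t |x| with hxt | hxt
  · rcases lt_or_gt_of_ne (abs_pos.mp (ht.trans_lt hxt)) with hx | hx
    · have hs : softThreshold t x = x + t := by
        rw [softThreshold, Real.sign_of_neg hx, abs_of_neg hx, max_eq_left (by grind)]; ring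
      rw [hs, show x - (x + t) = -t by ring, abs_neg, abs_of_nonneg ht, abs_of_neg (by grind)]
      exact ⟨le_rfl, by ring⟩
    · have hs : softThreshold t x = x - t := by
        rw [softThreshold, Real.sign_of_pos hx, abs_of_pos hx, max_eq_left (by grind)]; ring
      rw [hs, sub_sub_cancel, abs_of_nonneg ht, abs_of_pos (by grind)]
      exact ⟨le_rfl, by ring⟩
  · have hs : softThreshold t x = 0 := by
      rw [softThreshold, max_eq_right (by linarith), mul_zero]
    simpa [hs] using hxt

theorem mul_le_mul_softThreshold_add (ht : 0 ≤ t) (b : ℝ) :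
    b * x ≤ b * softThreshold t x + t * |b| := by
  have h := (softThreshold_subgradient x ht).1
  calc b * x = b * softThreshold t x + b * (x - softThreshold t x) := by ring
    _ ≤ b * softThreshold t x + |b| * |x - softThreshold t x| := by
      rw [← abs_mul]; gcongr; exact le_abs_self _
    _ ≤ b * softThreshold t x + t * |b| := by rw [mul_comm t]; gcongr

theorem softThreshold_mul_self (ht : 0 ≤ t) :
    softThreshold t x * x = softThreshold t x ^ 2 + t * |softThreshold t x| := by
  linear_combination (softThreshold_subgradient x ht).2

end SoftThreshold

section GroupShrink

variable {ι : Type*} (c : ℝ) (A : Finset ι) (s : ι → ℝ)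

noncomputable def groupShrink (j : ι) : ℝ :=
  s j / √(∑ k ∈ A, s k ^ 2) * max (√(∑ k ∈ A, s k ^ 2) - c) 0

-- The guard is redundant: for `√(∑ s²) = 0` the quotient `s j / 0` is already `0`.
theorem groupShrink_eq_ite (j : ι) : groupShrink c A s j =
    if √(∑ k ∈ A, s k ^ 2) ≠ 0 then
      s j / √(∑ k ∈ A, s k ^ 2) * max (√(∑ k ∈ A, s k ^ 2) - c) 0
    else 0 := by
  split_ifs with h
  · rfl
  · rw [groupShrink, not_not.mp h, div_zero, zero_mul]

variable {c}

theorem sum_groupShrink_sq (hc : 0 ≤ c) :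
    ∑ j ∈ A, groupShrink c A s j ^ 2 = max (√(∑ k ∈ A, s k ^ 2) - c) 0 ^ 2 := by
  set N := √(∑ k ∈ A, s k ^ 2) with hN
  have hN2 : N ^ 2 = ∑ k ∈ A, s k ^ 2 := sq_sqrt (sum_nonneg fun _ _ => sq_nonneg _)
  rcases eq_or_ne N 0 with h0 | h0
  · simp [groupShrink, ← hN, h0, hc]
  · simp_rw [groupShrink, ← hN, mul_pow, div_pow, ← sum_mul, ← sum_div, ← hN2]
    field_simp

theorem forall_groupShrink_eq_zero_iff (hc : 0 ≤ c) :
    (∀ j ∈ A, groupShrink c A s j = 0) ↔ √(∑ k ∈ A, s k ^ 2) ≤ c := by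
  calc (∀ j ∈ A, groupShrink c A s j = 0) ↔ ∑ j ∈ A, groupShrink c A s j ^ 2 = 0 := by
        simp [sum_eq_zero_iff_of_nonneg fun _ _ => sq_nonneg _]
    _ ↔ √(∑ k ∈ A, s k ^ 2) ≤ c := by
        rw [sum_groupShrink_sq A s hc, sq_eq_zero_iff, max_eq_right_iff, sub_nonpos]

end GroupShrink

section BlockIncrement

variable {ι : Type*} (t x : ι → ℝ) (c : ℝ) (A : Finset ι)

noncomputable def blockIncrement (β : ι → ℝ) : ℝ :=
  ∑ j ∈ A, (t j * |β j| + β j ^ 2 / 2 - β j * x j) + c * √(∑ j ∈ A, β j ^ 2)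

variable {t x c A}

theorem blockIncrement_nonneg (ht : ∀ j ∈ A, 0 ≤ t j)
    (hc : √(∑ j ∈ A, softThreshold (t j) (x j) ^ 2) ≤ c) (β : ι → ℝ) :
    0 ≤ blockIncrement t x c A β := by
  set s := fun j => softThreshold (t j) (x j)
  have hx : ∑ j ∈ A, β j * x j ≤ ∑ j ∈ A, β j * s j + ∑ j ∈ A, t j * |β j| := by
    rw [← sum_add_distrib]
    exact sum_le_sum fun j hj => mul_le_mul_softThreshold_add _ (ht j hj) _
  have hs : ∑ j ∈ A, β j * s j ≤ c * √(∑ j ∈ A, β j ^ 2) := by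
    rw [mul_comm c]
    exact (sum_mul_le_sqrt_mul_sqrt A β s).trans (by gcongr)
  have hβ : 0 ≤ ∑ j ∈ A, β j ^ 2 / 2 := sum_nonneg fun _ _ => by positivity
  rw [blockIncrement, sum_sub_distrib, sum_add_distrib]
  linarith

theorem blockIncrement_of_eq_groupShrink (ht : ∀ j ∈ A, 0 ≤ t j) (hc : 0 ≤ c) {β : ι → ℝ}
    (hβ : ∀ j ∈ A, β j = groupShrink c A (fun j => softThreshold (t j) (x j)) j) :
    blockIncrement t x c A β =
      -(max (√(∑ j ∈ A, softThreshold (t j) (x j) ^ 2) - c) 0 ^ 2 / 2) := by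
  set s := fun j => softThreshold (t j) (x j)
  set N := √(∑ j ∈ A, s j ^ 2)
  set r := max (N - c) 0
  have hN : N ^ 2 = ∑ j ∈ A, s j ^ 2 := sq_sqrt (sum_nonneg fun _ _ => sq_nonneg _)
  have hr : r * (N - c) = r ^ 2 := by
    rcases max_cases (N - c) 0 with ⟨h, -⟩ | ⟨h, -⟩ <;> simp only [r, h] <;> ring
  have hk : r / N * N = r := by
    rcases eq_or_ne N 0 with h0 | h0
    · simp [r, h0, hc]
    · field_simp
  have hnorm : √(∑ j ∈ A, β j ^ 2) = r := by
    rw [sum_congr rfl fun j hj => by rw [hβ j hj], sum_groupShrink_sq A s hc,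
      sqrt_sq (le_max_right _ _)]
  have hterm : ∀ j ∈ A, t j * |β j| + β j ^ 2 / 2 - β j * x j =
      ((r / N) ^ 2 / 2 - r / N) * s j ^ 2 := by
    intro j hj
    have hkj : β j = r / N * s j := by rw [hβ j hj, groupShrink]; ring
    have hk0 : 0 ≤ r / N := div_nonneg (le_max_right _ _) (sqrt_nonneg _)
    rw [hkj, abs_mul, abs_of_nonneg hk0, mul_assoc, softThreshold_mul_self _ (ht j hj)]
    ring
  rw [blockIncrement, sum_congr rfl hterm, ← mul_sum, ← hN, hnorm]
  linear_combination (r / N * N / 2 - N + r / 2) * hk - hr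

end BlockIncrement

theorem sum_eq_sum_sum_of_existsUnique_mem {ι κ M : Type*} [Fintype ι] [Fintype κ]
    [AddCommMonoid M] {G : κ → Finset ι} (hG : ∀ j, ∃! ℓ, j ∈ G ℓ) (f : ι → M) :
    ∑ j, f j = ∑ ℓ, ∑ j ∈ G ℓ, f j := by
  classical
  choose group hgroup hunique using hG
  rw [← sum_fiberwise univ group f]
  refine sum_congr rfl fun ℓ _ => sum_congr ?_ fun _ _ => rfl
  ext j
  simp only [mem_filter, mem_univ, true_and]
  exact ⟨fun h => h ▸ hgroup j, fun h => (hunique j ℓ h).symm⟩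

noncomputable def sparseGroupLassoObjective {ι κ : Type*} [Fintype ι] [Fintype κ]
    (lam μ : ℝ) (d : ι → ℝ) (w : κ → ℝ) (G : κ → Finset ι) (ξ β : ι → ℝ) : ℝ :=
  lam * ∑ j, d j * |β j| + μ * ∑ ℓ, w ℓ * √(∑ k ∈ G ℓ, β k ^ 2) + 1 / 2 * ∑ j, (β j - ξ j) ^ 2

theorem sparseGroupLassoObjective_sub_zero {ι κ : Type*} [Fintype ι] [Fintype κ]
    {lam μ : ℝ} {d : ι → ℝ} {w : κ → ℝ} {G : κ → Finset ι} (hG : ∀ j, ∃! ℓ, j ∈ G ℓ)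
    (ξ β : ι → ℝ) :
    sparseGroupLassoObjective lam μ d w G ξ β - sparseGroupLassoObjective lam μ d w G ξ 0 =
      ∑ ℓ, blockIncrement (fun j => lam * d j) ξ (μ * w ℓ) (G ℓ) β := by
  have hexpand : sparseGroupLassoObjective lam μ d w G ξ β -
      sparseGroupLassoObjective lam μ d w G ξ 0 =
      ∑ j, (lam * d j * |β j| + β j ^ 2 / 2 - β j * ξ j) +
        ∑ ℓ, μ * w ℓ * √(∑ k ∈ G ℓ, β k ^ 2) :=
    calc _ = ∑ j, lam * (d j * |β j|) + ∑ j, 1 / 2 * (β j - ξ j) ^ 2 - ∑ j, 1 / 2 * ξ j ^ 2 +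
          ∑ ℓ, μ * (w ℓ * √(∑ k ∈ G ℓ, β k ^ 2)) := by
          simp only [sparseGroupLassoObjective, Pi.zero_apply, abs_zero, mul_zero, sum_const_zero,
            zero_pow two_ne_zero, sqrt_zero, zero_sub, neg_sq, mul_sum]
          ring
      _ = _ := by
          rw [← sum_add_distrib, ← sum_sub_distrib]
          congr 1 <;> exact sum_congr rfl fun _ _ => by ring
  rw [hexpand, sum_eq_sum_sum_of_existsUnique_mem hG, ← sum_add_distrib]
  rfl

/-- Zero-solution characterization for the sparse group lasso prox: with
soft-thresholding `S` and group shrinkage `T`, `T(S(ξ)) = 0` iff every group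
satisfies `‖S(ξ)_{Gₗ}‖₂ ≤ μ wₗ`; equivalently, `β = 0` minimizes
`h(β) + (1/2)‖β - ξ‖²` iff `‖S(ξ)_{Gₗ}‖₂ ≤ μ wₗ` for all `ℓ`. -/
theorem stmt_15 (pp g : ℕ) (lam μ : ℝ) (hlam : 0 ≤ lam) (hμ : 0 ≤ μ)
    (d : Fin pp → ℝ) (hd : ∀ j, 0 ≤ d j)
    (w : Fin g → ℝ) (hw : ∀ ℓ, 0 ≤ w ℓ)
    (G : Fin g → Finset (Fin pp))
    (hpart : ∀ j : Fin pp, ∃! ℓ : Fin g, j ∈ G ℓ)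
    (ξ : Fin pp → ℝ)
    (S : Fin pp → ℝ)
    (hS : ∀ j, S j = Real.sign (ξ j) * max (|ξ j| - lam * d j) 0)
    (T : Fin pp → ℝ)
    (hT : ∀ ℓ : Fin g, ∀ j ∈ G ℓ,
      T j =
        if Real.sqrt (∑ k ∈ G ℓ, (S k)^2) ≠ 0 then
          (S j / Real.sqrt (∑ k ∈ G ℓ, (S k)^2)) *
            max (Real.sqrt (∑ k ∈ G ℓ, (S k)^2) - μ * w ℓ) 0
        else 0) :
    (T = 0 ↔ ∀ ℓ : Fin g, Real.sqrt (∑ k ∈ G ℓ, (S k)^2) ≤ μ * w ℓ) ∧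
    ((∀ β : Fin pp → ℝ,
        lam * ∑ j, d j * |(0 : Fin pp → ℝ) j|
          + μ * ∑ ℓ, w ℓ * Real.sqrt (∑ k ∈ G ℓ, ((0 : Fin pp → ℝ) k)^2)
          + (1/2) * ∑ j, ((0 : Fin pp → ℝ) j - ξ j)^2
        ≤ lam * ∑ j, d j * |β j|
          + μ * ∑ ℓ, w ℓ * Real.sqrt (∑ k ∈ G ℓ, (β k)^2)
          + (1/2) * ∑ j, (β j - ξ j)^2)
      ↔ ∀ ℓ : Fin g, Real.sqrt (∑ k ∈ G ℓ, (S k)^2) ≤ μ * w ℓ) := by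
  have ht : ∀ j, 0 ≤ lam * d j := fun j => mul_nonneg hlam (hd j)
  have hc : ∀ ℓ, 0 ≤ μ * w ℓ := fun ℓ => mul_nonneg hμ (hw ℓ)
  obtain rfl : S = fun j => softThreshold (lam * d j) (ξ j) := funext hS
  have hT' : ∀ ℓ, ∀ j ∈ G ℓ, T j = groupShrink (μ * w ℓ) (G ℓ) _ j :=
    fun ℓ j hj => (hT ℓ j hj).trans (groupShrink_eq_ite _ _ _ j).symm
  refine ⟨?_, ?_⟩
  · calc T = 0 ↔ ∀ ℓ, ∀ j ∈ G ℓ, T j = 0 :=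
          ⟨fun h _ j _ => congrFun h j,
            fun h => funext fun j => (hpart j).elim fun ℓ hj _ => h ℓ j hj⟩
      _ ↔ _ := forall_congr' fun ℓ => by
          rw [← forall_groupShrink_eq_zero_iff _ _ (hc ℓ)]
          exact forall₂_congr fun j hj => by rw [hT' ℓ j hj]
  · change (∀ β, sparseGroupLassoObjective lam μ d w G ξ 0 ≤
      sparseGroupLassoObjective lam μ d w G ξ β) ↔ _
    simp_rw [← sub_nonneg (b := sparseGroupLassoObjective lam μ d w G ξ 0),
      sparseGroupLassoObjective_sub_zero hpart]
    refine ⟨fun h ℓ => ?_, fun h β => sum_nonneg fun ℓ _ =>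
      blockIncrement_nonneg (fun j _ => ht j) (h ℓ) β⟩
    have hshrink := h T
    rw [sum_congr rfl fun ℓ _ => blockIncrement_of_eq_groupShrink
      (fun j _ => ht j) (hc ℓ) (hT' ℓ)] at hshrink
    have hblock := (sum_eq_zero_iff_of_nonpos fun ℓ _ => neg_nonpos.mpr (by positivity)).mp
      (le_antisymm (sum_nonpos fun ℓ _ => neg_nonpos.mpr (by positivity)) hshrink) ℓ (mem_univ ℓ)
    simpa [sub_nonpos] using hblock
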